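/- Let F = h + g where ∇h is L_{∇h}-Lipschitz and g: ℝᵈ → ℝ̄ is proper, lsc, ρ-weakly convex. For stepsize λ ∈ (0, min{ρ⁻¹/2, L_{∇h}⁻¹}], the proximal gradient step x_{k+1} = prox_{λg}(x_k − λ∇h(x_k)) satisfies F(x_{k+1}) + (1/2)(λ⁻¹ − ρ)‖x_k − x_{k+1}‖² ≤ F(x_k). -/

import Mathlib

/-!
Write `c = 1/(2λ)`. The point `x_{k+1}` minimizes `φ(z) = g z + ⟪∇h x_k, z - x_k⟫ + c‖z - x_k‖²`,
and `φ` is `(λ⁻¹ - ρ)`-strongly convex because `g` is `ρ`-weakly convex. Comparing `φ(x_{k+1})`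
with `φ` at the points `t • x_k + (1 - t) • x_{k+1}` and letting `t → 0` gives the quadratic growth
`g x_{k+1} + ⟪∇h x_k, x_{k+1} - x_k⟫ + (λ⁻¹ - ρ/2)‖x_{k+1} - x_k‖² ≤ g x_k`.
Adding the descent lemma `h x_{k+1} ≤ h x_k + ⟪∇h x_k, x_{k+1} - x_k⟫ + (L/2)‖x_{k+1} - x_k‖²`
and using `L ≤ λ⁻¹` gives the claim.
-/

noncomputable section
open Filter Metric Set

/-- Euclidean space ℝⁿ. -/
abbrev En (n : ℕ) := EuclideanSpace ℝ (Fin n)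

/-- A proper extended-real-valued function: never `⊥` and not identically `⊤`. -/
def ProperFn {n : ℕ} (g : En n → EReal) : Prop := (∀ x, g x ≠ ⊥) ∧ ∃ x, g x ≠ ⊤

/-- ρ-weak convexity for extended-real-valued functions: `g + (ρ/2)‖·‖²` is convex. -/
def WeaklyConvexE {n : ℕ} (ρ : ℝ) (g : En n → EReal) : Prop :=
  ∀ x y : En n, ∀ t : ℝ, 0 ≤ t → t ≤ 1 →
    g (t • x + (1 - t) • y) + (((ρ / 2) * ‖t • x + (1 - t) • y‖ ^ 2 : ℝ) : EReal)
      ≤ (t : EReal) * (g x + (((ρ / 2) * ‖x‖ ^ 2 : ℝ) : EReal))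
        + ((1 - t : ℝ) : EReal) * (g y + (((ρ / 2) * ‖y‖ ^ 2 : ℝ) : EReal))

/-- m-strong convexity for extended-real-valued functions. -/
def StronglyConvexE {n : ℕ} (m : ℝ) (f : En n → EReal) : Prop :=
  ∀ x y : En n, ∀ t : ℝ, 0 ≤ t → t ≤ 1 →
    f (t • x + (1 - t) • y) + (((m / 2) * (t * (1 - t)) * ‖x - y‖ ^ 2 : ℝ) : EReal)
      ≤ (t : EReal) * f x + ((1 - t : ℝ) : EReal) * f y

/-- ρ-weak convexity, real-valued version: `g + (ρ/2)‖·‖²` is convex. -/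
def WeaklyConvexR {n : ℕ} (ρ : ℝ) (g : En n → ℝ) : Prop :=
  ConvexOn ℝ Set.univ (fun x => g x + (ρ / 2) * ‖x‖ ^ 2)

/-- `v` is a Fréchet subgradient of the extended-real-valued `g` at `x`:
`g y ≥ g x + ⟨v, y - x⟩ + o(‖y - x‖)` as `y → x`. -/
def FSubE {n : ℕ} (g : En n → EReal) (x v : En n) : Prop :=
  ∀ ε : ℝ, 0 < ε → ∀ᶠ y in nhds x,
    g x + ((inner ℝ v (y - x) - ε * ‖y - x‖ : ℝ) : EReal) ≤ g y

/-- `v` is a Fréchet subgradient of the real-valued `g` at `x`. -/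
def FSubR {n : ℕ} (g : En n → ℝ) (x v : En n) : Prop :=
  ∀ ε : ℝ, 0 < ε → ∀ᶠ y in nhds x,
    g x + (inner ℝ v (y - x) : ℝ) - ε * ‖y - x‖ ≤ g y

/-- Moreau envelope of an extended-real-valued function. -/
def moreauE {n : ℕ} (g : En n → EReal) (μ : ℝ) (y : En n) : EReal :=
  ⨅ z, g z + (((1 / (2 * μ)) * ‖z - y‖ ^ 2 : ℝ) : EReal)

/-- Moreau envelope of a real-valued function. -/
def moreauR {n : ℕ} (g : En n → ℝ) (μ : ℝ) (y : En n) : ℝ :=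
  ⨅ z, (g z + (1 / (2 * μ)) * ‖z - y‖ ^ 2)

/-- `p` is a proximal point of the extended-real-valued `g` with parameter `μ` at `y`,
i.e. a minimizer of `z ↦ g z + (1/(2μ))‖z - y‖²`. -/
def IsProxPtE {n : ℕ} (g : En n → EReal) (μ : ℝ) (y p : En n) : Prop :=
  ∀ z, g p + (((1 / (2 * μ)) * ‖p - y‖ ^ 2 : ℝ) : EReal)
      ≤ g z + (((1 / (2 * μ)) * ‖z - y‖ ^ 2 : ℝ) : EReal)

/-- `p` is a proximal point of the real-valued `g` with parameter `μ` at `y`. -/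
def IsProxPtR {n : ℕ} (g : En n → ℝ) (μ : ℝ) (y p : En n) : Prop :=
  ∀ z, g p + (1 / (2 * μ)) * ‖p - y‖ ^ 2 ≤ g z + (1 / (2 * μ)) * ‖z - y‖ ^ 2

/-- `L`-Lipschitz continuity of a real-valued function. -/
def LipschitzR {n : ℕ} (L : ℝ) (g : En n → ℝ) : Prop := ∀ x y, |g x - g y| ≤ L * ‖x - y‖

/-- `L`-Lipschitz continuity of a map between Euclidean spaces. -/
def LipschitzMap {n m : ℕ} (L : ℝ) (f : En n → En m) : Prop :=
  ∀ x y, ‖f x - f y‖ ≤ L * ‖x - y‖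

open Topology
open scoped RealInnerProductSpace

theorem le_of_forall_mem_Ioc_le_add_mul {a b c : ℝ} (h : ∀ t ∈ Ioc (0 : ℝ) 1, a ≤ b + t * c) :
    a ≤ b := by
  have hlim : Tendsto (fun t : ℝ => b + t * c) (𝓝[>] 0) (𝓝 b) :=
    tendsto_nhdsWithin_of_tendsto_nhds
      ((by fun_prop : Continuous fun t : ℝ => b + t * c).tendsto' 0 b (by simp))
  exact ge_of_tendsto hlim (eventually_of_mem (Ioc_mem_nhdsGT one_pos) h)

theorem EReal.sub_add_le_of_le_add_of_add_le {x : EReal} {u v r s : ℝ}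
    (hu : (u : EReal) ≤ x + s) (hv : x + r ≤ v) : u - s + r ≤ v := by
  have htop : x ≠ ⊤ := by rintro rfl; simp at hv
  have hbot : x ≠ ⊥ := by rintro rfl; simp at hu
  lift x to ℝ using ⟨htop, hbot⟩
  norm_cast at hu hv
  linarith

section InnerProductSpace

variable {E : Type*} [NormedAddCommGroup E] [InnerProductSpace ℝ E]

theorem norm_smul_add_one_sub_smul_sq (x y : E) (t : ℝ) :
    ‖t • x + (1 - t) • y‖ ^ 2 = t * ‖x‖ ^ 2 + (1 - t) * ‖y‖ ^ 2 - t * (1 - t) * ‖x - y‖ ^ 2 := by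
  rw [norm_add_sq_real, norm_sub_sq_real, norm_smul, norm_smul, real_inner_smul_left,
    real_inner_smul_right, mul_pow, mul_pow, Real.norm_eq_abs, Real.norm_eq_abs, sq_abs, sq_abs]
  ring

theorem le_add_inner_add_sq_of_hasGradientAt [CompleteSpace E] {f : E → ℝ} {f' : E → E} {L : ℝ}
    {x : E} (hf : ∀ y, HasGradientAt f (f' y) y) (hL : ∀ y, ‖f' y - f' x‖ ≤ L * ‖y - x‖)
    (y : E) : f y ≤ f x + ⟪f' x, y - x⟫ + L / 2 * ‖y - x‖ ^ 2 := by
  set u := y - x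
  set φ : ℝ → ℝ := fun t => f (x + t • u) - t * ⟪f' x, u⟫ - L / 2 * t ^ 2 * ‖u‖ ^ 2
  have hφ (t : ℝ) : HasDerivAt φ (⟪f' (x + t • u) - f' x, u⟫ - L * t * ‖u‖ ^ 2) t := by
    have hγ : HasDerivAt (fun s : ℝ => x + s • u) u t := by
      simpa using ((hasDerivAt_id t).smul_const u).const_add x
    have hfγ : HasDerivAt (fun s : ℝ => f (x + s • u)) ⟪f' (x + t • u), u⟫ t := by
      have := (hf _).hasFDerivAt.comp_hasDerivAt t hγ
      rwa [InnerProductSpace.toDual_apply_apply] at this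
    refine ((hfγ.sub ((hasDerivAt_id t).mul_const ⟪f' x, u⟫)).sub
      (((hasDerivAt_pow 2 t).const_mul (L / 2)).mul_const (‖u‖ ^ 2))).congr_deriv ?_
    simp only [inner_sub_left]
    ring
  have hφ_nonpos : ∀ t ∈ interior (Ici (0 : ℝ)),
      ⟪f' (x + t • u) - f' x, u⟫ - L * t * ‖u‖ ^ 2 ≤ 0 := by
    intro t ht
    rw [interior_Ici, mem_Ioi] at ht
    have hLt := hL (x + t • u)
    rw [add_sub_cancel_left, norm_smul, Real.norm_of_nonneg ht.le] at hLt
    nlinarith [real_inner_le_norm (f' (x + t • u) - f' x) u, norm_nonneg u]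
  have hanti : AntitoneOn φ (Ici 0) :=
    antitoneOn_of_hasDerivWithinAt_nonpos (convex_Ici 0)
      (fun t _ => (hφ t).continuousAt.continuousWithinAt) (fun t _ => (hφ t).hasDerivWithinAt)
      hφ_nonpos
  have hφ01 := hanti (mem_Ici.mpr le_rfl) (mem_Ici.mpr zero_le_one) zero_le_one
  simp only [φ, zero_smul, add_zero, one_smul, u, add_sub_cancel] at hφ01
  linarith

end InnerProductSpace

theorem WeaklyConvexE.add_inner_add_sq_le {d : ℕ} {ρ lam : ℝ} {g : En d → EReal}
    (hwc : WeaklyConvexE ρ g) {v x y : En d}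
    (hy : ∀ z, g y + ((⟪v, y - x⟫ + 1 / (2 * lam) * ‖y - x‖ ^ 2 : ℝ) : EReal)
        ≤ g z + ((⟪v, z - x⟫ + 1 / (2 * lam) * ‖z - x‖ ^ 2 : ℝ) : EReal)) :
    g y + ((⟪v, y - x⟫ + (lam⁻¹ - ρ / 2) * ‖y - x‖ ^ 2 : ℝ) : EReal) ≤ g x := by
  by_cases hxtop : g x = ⊤
  · rw [hxtop]; exact le_top
  by_cases hybot : g y = ⊥
  · rw [hybot, EReal.bot_add]; exact bot_le
  have hyx : g y + ((⟪v, y - x⟫ + 1 / (2 * lam) * ‖y - x‖ ^ 2 : ℝ) : EReal) ≤ g x := by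
    simpa using hy x
  have hytop : g y ≠ ⊤ := by
    rintro hgy
    rw [hgy, EReal.top_add_coe, top_le_iff] at hyx
    exact hxtop hyx
  have hxbot : g x ≠ ⊥ := by
    rintro hgx
    rw [hgx, le_bot_iff, EReal.add_eq_bot_iff] at hyx
    exact hyx.elim hybot (EReal.coe_ne_bot _)
  obtain ⟨a, ha⟩ : ∃ a : ℝ, g x = a := ⟨(g x).toReal, (EReal.coe_toReal hxtop hxbot).symm⟩
  obtain ⟨b, hb⟩ : ∃ b : ℝ, g y = b := ⟨(g y).toReal, (EReal.coe_toReal hytop hybot).symm⟩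
  rw [ha, hb, ← EReal.coe_add, EReal.coe_le_coe_iff]
  refine le_of_forall_mem_Ioc_le_add_mul (c := (1 / (2 * lam) - ρ / 2) * ‖y - x‖ ^ 2)
    fun t ⟨ht0, ht1⟩ => ?_
  set z := t • x + (1 - t) • y
  have hconvex := hwc x y t ht0.le ht1
  rw [ha, hb] at hconvex
  norm_cast at hconvex
  have hmin := hy z
  rw [hb, ← EReal.coe_add] at hmin
  have hzx : z - x = (1 - t) • (y - x) := by module
  have hcomb := EReal.sub_add_le_of_le_add_of_add_le hmin hconvex
  rw [hzx, inner_smul_right, norm_smul, mul_pow, Real.norm_eq_abs, sq_abs,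
    norm_smul_add_one_sub_smul_sq, norm_sub_rev x y] at hcomb
  refine le_of_mul_le_mul_left ?_ ht0
  linear_combination hcomb

theorem prox_gradient_sufficient_decrease_general {d : ℕ} (ρ Lnh lam : ℝ)
    (hlam0 : 0 < lam) (hlam : lam ≤ min (ρ⁻¹ / 2) Lnh⁻¹)
    (h : En d → ℝ) (h' : En d → En d) (hgrad : ∀ x, HasGradientAt h (h' x) x)
    (hhl : LipschitzMap Lnh h')
    (g : En d → EReal)
    (hwc : WeaklyConvexE ρ g)
    (xk xk1 : En d)
    (hstep : ∀ z : En d,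
      g xk1 + ((inner ℝ (h' xk) (xk1 - xk) + 1 / (2 * lam) * ‖xk1 - xk‖ ^ 2 : ℝ) : EReal)
        ≤ g z + ((inner ℝ (h' xk) (z - xk) + 1 / (2 * lam) * ‖z - xk‖ ^ 2 : ℝ) : EReal)) :
    ((h xk1 : ℝ) : EReal) + g xk1 +
        ((1 / 2 * (lam⁻¹ - ρ) * ‖xk - xk1‖ ^ 2 : ℝ) : EReal)
      ≤ ((h xk : ℝ) : EReal) + g xk := by
  set p := ⟪h' xk, xk1 - xk⟫
  set M := ‖xk1 - xk‖ ^ 2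
  have hL : Lnh ≤ lam⁻¹ := le_inv_of_le_inv₀ hlam0 (hlam.trans (min_le_right _ _))
  have hdescent : h xk1 ≤ h xk + p + Lnh / 2 * M :=
    le_add_inner_add_sq_of_hasGradientAt hgrad (fun y => hhl y xk) xk1
  have hgrowth : g xk1 + ((p + (lam⁻¹ - ρ / 2) * M : ℝ) : EReal) ≤ g xk :=
    hwc.add_inner_add_sq_le hstep
  have hsmooth : h xk1 + 1 / 2 * (lam⁻¹ - ρ) * ‖xk - xk1‖ ^ 2
      ≤ h xk + (p + (lam⁻¹ - ρ / 2) * M) := by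
    rw [norm_sub_rev]
    linarith [mul_le_mul_of_nonneg_right hL (sq_nonneg ‖xk1 - xk‖)]
  calc ((h xk1 : ℝ) : EReal) + g xk1 + ((1 / 2 * (lam⁻¹ - ρ) * ‖xk - xk1‖ ^ 2 : ℝ) : EReal)
      = g xk1 + ((h xk1 + 1 / 2 * (lam⁻¹ - ρ) * ‖xk - xk1‖ ^ 2 : ℝ) : EReal) := by
        rw [EReal.coe_add]; ac_rfl
    _ ≤ g xk1 + ((h xk + (p + (lam⁻¹ - ρ / 2) * M) : ℝ) : EReal) := by gcongr
    _ = (h xk : EReal) + (g xk1 + ((p + (lam⁻¹ - ρ / 2) * M : ℝ) : EReal)) := by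
        rw [EReal.coe_add]; ac_rfl
    _ ≤ (h xk : EReal) + g xk := by gcongr

/-- sufficient decrease of the proximal gradient step for
`F = h + g` with `g` proper, lsc, ρ-weakly convex and stepsize
`λ ∈ (0, min{ρ⁻¹/2, L_{∇h}⁻¹}]`. -/
theorem prox_gradient_sufficient_decrease {d : ℕ} (ρ Lnh lam : ℝ)
    (hρ : 0 < ρ) (hLnh : 0 < Lnh)
    (hlam0 : 0 < lam) (hlam : lam ≤ min (ρ⁻¹ / 2) Lnh⁻¹)
    (h : En d → ℝ) (h' : En d → En d) (hgrad : ∀ x, HasGradientAt h (h' x) x)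
    (hhl : LipschitzMap Lnh h')
    (g : En d → EReal) (hproper : ProperFn g) (hlsc : LowerSemicontinuous g)
    (hwc : WeaklyConvexE ρ g)
    (xk xk1 : En d)
    (hstep : ∀ z : En d,
      g xk1 + ((inner ℝ (h' xk) (xk1 - xk) + 1 / (2 * lam) * ‖xk1 - xk‖ ^ 2 : ℝ) : EReal)
        ≤ g z + ((inner ℝ (h' xk) (z - xk) + 1 / (2 * lam) * ‖z - xk‖ ^ 2 : ℝ) : EReal)) :
    ((h xk1 : ℝ) : EReal) + g xk1 +
        ((1 / 2 * (lam⁻¹ - ρ) * ‖xk - xk1‖ ^ 2 : ℝ) : EReal)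
      ≤ ((h xk : ℝ) : EReal) + g xk :=
  prox_gradient_sufficient_decrease_general ρ Lnh lam hlam0 hlam h h' hgrad hhl g hwc xk xk1 hstep
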